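/- arXiv:2503.04448 — 4 statements merged into one kernel-verified Lean document; each statement's English description precedes it below -/
import Mathlib

section
/- Let ρ > 0, let b > 0, and let π be a probability density on [0,1]. Define s : [0,1] → ℝ by s(x) = b·( exp( ρ + ρ·∫_x^1 π(ξ) dξ ) − ρ·(∫_x^1 π(ω) dω)·exp( ρ·∫_x^1 π(ξ) dξ ) ). Then for all x ∈ [0,1]: s(x) = b·( 1 + e^ρ − exp( ρ·∫_x^1 π(ξ) dξ ) ) + ρ·∫_{z=x}^{1} π(z)·s(z) dz. -/
/-!
Write `s = g ∘ F` with `F z = ∫_z^1 π` and `g u = b (e^{ρ + ρu} - ρ u e^{ρu})`. Since `F`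
is absolutely continuous with `F' = -π` almost everywhere, the substitution `u = F z` turns
`ρ ∫_x^1 π(z) s(z) dz` into `∫_0^{F x} ρ g(u) du = H(F x) - H(0)`, where
`H u = b (e^{ρ + ρu} - ρ u e^{ρu} + e^{ρu})` is an explicit antiderivative of `ρ g`.
-/

open MeasureTheory Set Filter

namespace AbsolutelyContinuousOnInterval

variable {X Y : Type*} [PseudoMetricSpace X] [PseudoMetricSpace Y] {a b : ℝ}

theorem _root_.LipschitzOnWith.comp_absolutelyContinuousOnInterval {f : ℝ → Y} {g : Y → X}
    {K : NNReal} {s : Set Y} (hg : LipschitzOnWith K g s)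
    (hf : AbsolutelyContinuousOnInterval f a b) (hfs : MapsTo f (uIcc a b) s) :
    AbsolutelyContinuousOnInterval (g ∘ f) a b := by
  unfold AbsolutelyContinuousOnInterval at hf ⊢
  refine squeeze_zero' (Eventually.of_forall fun _ ↦ Finset.sum_nonneg fun _ _ ↦ dist_nonneg)
    ?_ (by simpa using hf.const_mul (K : ℝ))
  rw [eventually_inf_principal]
  filter_upwards with E hE
  rw [Finset.mul_sum]
  gcongr with i hi
  exact hg.dist_le_mul _ (hfs (hE.1 i hi).1) _ (hfs (hE.1 i hi).2)

theorem _root_.LocallyLipschitz.comp_absolutelyContinuousOnInterval {E : Type*}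
    [SeminormedAddCommGroup E] {f : ℝ → E} {g : E → X}
    (hg : LocallyLipschitz g) (hf : AbsolutelyContinuousOnInterval f a b) :
    AbsolutelyContinuousOnInterval (g ∘ f) a b := by
  have hcpt : IsCompact (f '' uIcc a b) :=
    isCompact_uIcc.image_of_continuousOn hf.continuousOn
  obtain ⟨K, hK⟩ := hg.locallyLipschitzOn.exists_lipschitzOnWith_of_compact hcpt
  exact hK.comp_absolutelyContinuousOnInterval hf (mapsTo_image f _)

theorem integral_comp_mul_deriv {φ G g : ℝ → ℝ} (hφ : AbsolutelyContinuousOnInterval φ a b)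
    (hG : ∀ u, HasDerivAt G (g u) u) (hg : Continuous g) :
    ∫ z in a..b, g (φ z) * deriv φ z = G (φ b) - G (φ a) := by
  have hG1 : ContDiff ℝ 1 G := contDiff_one_iff_deriv.2
    ⟨fun u ↦ (hG u).differentiableAt, (funext fun u ↦ (hG u).deriv : deriv G = g) ▸ hg⟩
  change _ = (G ∘ φ) b - (G ∘ φ) a
  rw [← (hG1.locallyLipschitz.comp_absolutelyContinuousOnInterval hφ).integral_deriv_eq_sub]
  refine intervalIntegral.integral_congr_ae ?_
  filter_upwards [hφ.ae_differentiableAt] with z hz hzab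
  exact (((hG (φ z)).comp z (hz (uIoc_subset_uIcc hzab)).hasDerivAt).deriv).symm

end AbsolutelyContinuousOnInterval

theorem intervalIntegral.integral_mul_comp_integral_right {f G g : ℝ → ℝ} {a b : ℝ}
    (hf : IntervalIntegrable f volume a b) (hG : ∀ u, HasDerivAt G (g u) u) (hg : Continuous g) :
    ∫ z in a..b, f z * g (∫ t in z..b, f t) = G (∫ t in a..b, f t) - G 0 := by
  set φ : ℝ → ℝ := fun z ↦ ∫ t in z..b, f t
  have hφ_eq : φ = fun z ↦ -∫ t in b..z, f t := funext fun z ↦ integral_symm b z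
  have hφ : AbsolutelyContinuousOnInterval φ a b :=
    hφ_eq ▸ (hf.absolutelyContinuousOnInterval_intervalIntegral right_mem_uIcc).fun_neg
  have hφ' : ∀ᵐ z, z ∈ uIoc a b → deriv φ z = -f z := by
    filter_upwards [hf.ae_hasDerivAt_integral] with z hz hzab
    rw [hφ_eq]
    exact (hz (uIoc_subset_uIcc hzab) b right_mem_uIcc).neg.deriv
  calc ∫ z in a..b, f z * g (φ z)
      = ∫ z in a..b, -(g (φ z) * deriv φ z) := by
        refine integral_congr_ae ?_
        filter_upwards [hφ'] with z hz hzab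
        rw [hz hzab]
        ring
    _ = G (φ a) - G 0 := by
        rw [integral_neg, hφ.integral_comp_mul_deriv hG hg, show φ b = 0 from integral_same]
        ring

theorem delivery_generated_time_recursion_general
    (ρ b : ℝ)
    (π : ℝ → ℝ)
    (hπint : IntervalIntegrable π volume 0 1)
    (s : ℝ → ℝ)
    (hs : ∀ x : ℝ,
      s x = b * (Real.exp (ρ + ρ * ∫ ξ in x..(1 : ℝ), π ξ)
        - ρ * (∫ ω in x..(1 : ℝ), π ω) * Real.exp (ρ * ∫ ξ in x..(1 : ℝ), π ξ))) :
    ∀ x ∈ Set.Icc (0 : ℝ) 1,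
      s x = b * (1 + Real.exp ρ - Real.exp (ρ * ∫ ξ in x..(1 : ℝ), π ξ))
        + ρ * ∫ z in x..(1 : ℝ), π z * s z := by
  intro x hx
  have hπx : IntervalIntegrable π volume x 1 :=
    hπint.mono_set (by simpa [uIcc_of_le hx.2] using Icc_subset_Icc_left hx.1)
  set g : ℝ → ℝ := fun u ↦ b * (Real.exp (ρ + ρ * u) - ρ * u * Real.exp (ρ * u))
  have hG : ∀ u, HasDerivAt
      (fun u ↦ b * (Real.exp (ρ + ρ * u) - ρ * u * Real.exp (ρ * u) + Real.exp (ρ * u)))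
      (ρ * g u) u := by
    intro u
    have hlin : HasDerivAt (fun u : ℝ ↦ ρ * u) ρ u := by
      simpa using (hasDerivAt_id u).const_mul ρ
    refine (((hlin.const_add ρ).exp.fun_sub (hlin.fun_mul hlin.exp)).fun_add hlin.exp).const_mul b
      |>.congr_deriv ?_
    ring
  have hrec :
      ρ * ∫ z in x..1, π z * s z = ∫ z in x..1, π z * (ρ * g (∫ ξ in z..1, π ξ)) := by
    rw [← intervalIntegral.integral_const_mul]
    refine intervalIntegral.integral_congr fun z _ ↦ ?_
    simp only [hs z, g]
    ring
  rw [hrec, intervalIntegral.integral_mul_comp_integral_right hπx hG (by fun_prop), hs x]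
  simp only [mul_zero, add_zero, zero_mul, sub_zero, Real.exp_zero]
  ring

/-- The expected extra time to delivery generated by a service one cycle
earlier, `s(x) = b·(exp(ρ + ρ∫_x^1 π) − ρ·(∫_x^1 π)·exp(ρ∫_x^1 π))`, satisfies
the recursion `s(x) = b·(1 + e^ρ − exp(ρ∫_x^1 π)) + ρ·∫_x^1 π(z)·s(z) dz`. -/
theorem delivery_generated_time_recursion
    (ρ b : ℝ) (hρ : 0 < ρ) (hb : 0 < b)
    (π : ℝ → ℝ) (hπmeas : Measurable π)
    (hπnn : ∀ x ∈ Set.Icc (0 : ℝ) 1, 0 ≤ π x)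
    (hπint : IntervalIntegrable π volume 0 1)
    (hπ1 : (∫ u in (0 : ℝ)..1, π u) = 1)
    (s : ℝ → ℝ)
    (hs : ∀ x : ℝ,
      s x = b * (Real.exp (ρ + ρ * ∫ ξ in x..(1 : ℝ), π ξ)
        - ρ * (∫ ω in x..(1 : ℝ), π ω) * Real.exp (ρ * ∫ ξ in x..(1 : ℝ), π ξ))) :
    ∀ x ∈ Set.Icc (0 : ℝ) 1,
      s x = b * (1 + Real.exp ρ - Real.exp (ρ * ∫ ξ in x..(1 : ℝ), π ξ))
        + ρ * ∫ z in x..(1 : ℝ), π z * s z :=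
  delivery_generated_time_recursion_general ρ b π hπint s hs
end

section
/- Let ρ ∈ (0,1), let π be a bounded probability density on [0,1], and let b : [0,1]² → [0,∞) be bounded measurable with supremum norm ‖b‖_∞. If g : [0,1]² → ℝ is a bounded measurable solution of g(x,y) = ρ·π(y)·∫*_{u=x}^{y} [g(x,u) + g(y,u)] du + b(x,y) for all x, y ∈ [0,1], then for all x, y ∈ [0,1]: |g(x,y)| ≤ ‖b‖_∞ + (2ρ(1+ρ)·π(y)/(1−ρ))·‖b‖_∞. -/
/-!
Write `P(x, y) = ∫*_{u=x}^{y} π(u) du` and `p = P(x, y)`. Along the arc from `x` to `y`,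
`P(x, ·)` is a primitive of `π`, while `P(y, ·) = (1 - p) + P(x, ·)` off the endpoint, so
`∫* π(u) P(x, u) du = p² / 2` and `∫* π(u) P(y, u) du = (1 - p) p + p² / 2`.
Hence if `|g(x, y)| ≤ ρ π(y) (α + β P(x, y)) + ‖b‖_∞` on the square, inserting this bound into
the equation gives the same bound with `(α, β)` replaced by `(2 ‖b‖_∞, ρ (2α + β))`.
Starting from `(2 sup |g|, 0)`, the second coefficient is then driven by the contraction
`β ↦ ρ (4 ‖b‖_∞ + β)` to its fixed point `4 ρ ‖b‖_∞ / (1 - ρ)`, and `P ≤ 1` gives the claim.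
-/

open MeasureTheory

/-- Circular integral: `∫*_{u=a}^{b} h(u) du` on the circle `[0,1)`.
It equals `∫_a^b h` if `a ≤ b` and `∫_a^1 h + ∫_0^b h` if `a > b`. -/
noncomputable def cint (a b : ℝ) (h : ℝ → ℝ) : ℝ :=
  if a ≤ b then ∫ u in a..b, h u
  else (∫ u in a..(1 : ℝ), h u) + ∫ u in (0 : ℝ)..b, h u

open Set

local notation "𝕀" => Icc (0 : ℝ) 1

theorem intervalIntegral.integral_mul_primitive {f : ℝ → ℝ} {a b : ℝ}
    (hf : IntervalIntegrable f volume a b) :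
    ∫ u in a..b, f u * ∫ v in a..u, f v = (∫ u in a..b, f u) ^ 2 / 2 := by
  have hF := hf.absolutelyContinuousOnInterval_intervalIntegral (c := a) left_mem_uIcc
  have hparts := hF.integral_deriv_mul_eq_sub hF
  have hderiv : ∀ᵐ u, u ∈ uIoc a b →
      deriv (fun x => ∫ v in a..x, f v) u * (∫ v in a..u, f v)
        + (∫ v in a..u, f v) * deriv (fun x => ∫ v in a..x, f v) u
        = 2 * (f u * ∫ v in a..u, f v) := by
    filter_upwards [hf.ae_hasDerivAt_integral] with u hu hmem
    rw [(hu (uIoc_subset_uIcc hmem) a left_mem_uIcc).deriv]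
    ring
  rw [intervalIntegral.integral_congr_ae hderiv, intervalIntegral.integral_const_mul,
    intervalIntegral.integral_same, mul_zero, sub_zero] at hparts
  linarith

theorem intervalIntegral.integral_mul_const_add_primitive {f : ℝ → ℝ} {a b : ℝ}
    (hf : IntervalIntegrable f volume a b) (k : ℝ) :
    ∫ u in a..b, f u * (k + ∫ v in a..u, f v)
      = k * (∫ u in a..b, f u) + (∫ u in a..b, f u) ^ 2 / 2 := by
  have hprim : IntervalIntegrable (fun u => f u * ∫ v in a..u, f v) volume a b :=
    hf.mul_continuousOn (intervalIntegral.continuousOn_primitive_interval' hf left_mem_uIcc)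
  simp only [mul_add]
  rw [intervalIntegral.integral_add (hf.mul_const k) hprim, intervalIntegral.integral_mul_const,
    intervalIntegral.integral_mul_primitive hf]
  ring

theorem MeasureTheory.IntegrableOn.intervalIntegrable_of_mem_Icc {h : ℝ → ℝ} {a b c d : ℝ}
    (hh : IntegrableOn h (Icc a b)) (hc : c ∈ Icc a b) (hd : d ∈ Icc a b) :
    IntervalIntegrable h volume c d :=
  (hh.mono_set (uIcc_subset_Icc hc hd)).intervalIntegrable

namespace cint

section Linear

variable {x y : ℝ} {h h₁ h₂ : ℝ → ℝ}

theorem of_le (hxy : x ≤ y) : cint x y h = ∫ u in x..y, h u := if_pos hxy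

theorem of_lt (hyx : y < x) :
    cint x y h = (∫ u in x..1, h u) + ∫ u in (0 : ℝ)..y, h u := if_neg hyx.not_ge

theorem const_mul (c : ℝ) : cint x y (fun u => c * h u) = c * cint x y h := by
  unfold cint
  split_ifs <;> simp only [intervalIntegral.integral_const_mul, mul_add]

theorem add (hx : x ∈ 𝕀) (hy : y ∈ 𝕀) (h₁i : IntegrableOn h₁ 𝕀) (h₂i : IntegrableOn h₂ 𝕀) :
    cint x y (fun u => h₁ u + h₂ u) = cint x y h₁ + cint x y h₂ := by
  have ii₁ : ∀ a ∈ 𝕀, ∀ b ∈ 𝕀, IntervalIntegrable h₁ volume a b :=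
    fun a ha b hb => h₁i.intervalIntegrable_of_mem_Icc ha hb
  have ii₂ : ∀ a ∈ 𝕀, ∀ b ∈ 𝕀, IntervalIntegrable h₂ volume a b :=
    fun a ha b hb => h₂i.intervalIntegrable_of_mem_Icc ha hb
  unfold cint
  split_ifs
  · exact intervalIntegral.integral_add (ii₁ x hx y hy) (ii₂ x hx y hy)
  · rw [intervalIntegral.integral_add (ii₁ x hx 1 unitInterval.one_mem)
      (ii₂ x hx 1 unitInterval.one_mem), intervalIntegral.integral_add
      (ii₁ 0 unitInterval.zero_mem y hy) (ii₂ 0 unitInterval.zero_mem y hy)]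
    ring

theorem mono (hx : x ∈ 𝕀) (hy : y ∈ 𝕀) (h₁i : IntegrableOn h₁ 𝕀) (h₂i : IntegrableOn h₂ 𝕀)
    (hle : ∀ u ∈ 𝕀, h₁ u ≤ h₂ u) : cint x y h₁ ≤ cint x y h₂ := by
  have key : ∀ a ∈ 𝕀, ∀ b ∈ 𝕀, a ≤ b → ∫ u in a..b, h₁ u ≤ ∫ u in a..b, h₂ u :=
    fun a ha b hb hab => intervalIntegral.integral_mono_on hab
      (h₁i.intervalIntegrable_of_mem_Icc ha hb) (h₂i.intervalIntegrable_of_mem_Icc ha hb)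
      fun u hu => hle u ⟨ha.1.trans hu.1, hu.2.trans hb.2⟩
  unfold cint
  split_ifs with hxy
  · exact key x hx y hy hxy
  · exact add_le_add (key x hx 1 unitInterval.one_mem hx.2)
      (key 0 unitInterval.zero_mem y hy hy.1)

theorem abs_le (hx : x ∈ 𝕀) (hy : y ∈ 𝕀) : |cint x y h| ≤ cint x y (fun u => |h u|) := by
  unfold cint
  split_ifs with hxy
  · exact intervalIntegral.abs_integral_le_integral_abs hxy
  · exact (abs_add_le _ _).trans (add_le_add
      (intervalIntegral.abs_integral_le_integral_abs hx.2)
      (intervalIntegral.abs_integral_le_integral_abs hy.1))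

theorem nonneg (hx : x ∈ 𝕀) (hy : y ∈ 𝕀) (hnn : ∀ u ∈ 𝕀, 0 ≤ h u) : 0 ≤ cint x y h := by
  have key : ∀ a ∈ 𝕀, ∀ b ∈ 𝕀, a ≤ b → 0 ≤ ∫ u in a..b, h u :=
    fun a ha b hb hab => intervalIntegral.integral_nonneg hab
      fun u hu => hnn u ⟨ha.1.trans hu.1, hu.2.trans hb.2⟩
  unfold cint
  split_ifs with hxy
  · exact key x hx y hy hxy
  · exact add_nonneg (key x hx 1 unitInterval.one_mem hx.2)
      (key 0 unitInterval.zero_mem y hy hy.1)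

theorem le_integral (hx : x ∈ 𝕀) (hy : y ∈ 𝕀) (hi : IntegrableOn h 𝕀)
    (hnn : ∀ u ∈ 𝕀, 0 ≤ h u) : cint x y h ≤ ∫ u in (0 : ℝ)..1, h u := by
  have ii : ∀ a ∈ 𝕀, ∀ b ∈ 𝕀, IntervalIntegrable h volume a b :=
    fun a ha b hb => hi.intervalIntegrable_of_mem_Icc ha hb
  have split : ∀ a ∈ 𝕀, ∀ b ∈ 𝕀, (∫ u in (0 : ℝ)..a, h u) + (∫ u in a..b, h u)
      + ∫ u in b..1, h u = ∫ u in (0 : ℝ)..1, h u := fun a ha b hb => by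
    rw [intervalIntegral.integral_add_adjacent_intervals (ii 0 unitInterval.zero_mem a ha)
      (ii a ha b hb), intervalIntegral.integral_add_adjacent_intervals
      (ii 0 unitInterval.zero_mem b hb) (ii b hb 1 unitInterval.one_mem)]
  have pos : ∀ a ∈ 𝕀, ∀ b ∈ 𝕀, a ≤ b → 0 ≤ ∫ u in a..b, h u :=
    fun a ha b hb hab => intervalIntegral.integral_nonneg hab
      fun u hu => hnn u ⟨ha.1.trans hu.1, hu.2.trans hb.2⟩
  unfold cint
  split_ifs with hxy
  · linarith [split x hx y hy, pos 0 unitInterval.zero_mem x hx hx.1,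
      pos y hy 1 unitInterval.one_mem hy.2]
  · linarith [split y hy x hx, pos y hy x hx (not_le.1 hxy).le]

theorem const_le {c : ℝ} (hx : x ∈ 𝕀) (hy : y ∈ 𝕀) (hc : 0 ≤ c) :
    cint x y (fun _ => c) ≤ c := by
  have h := const_mul (x := x) (y := y) (h := fun _ => (1 : ℝ)) c
  simp only [mul_one] at h
  rw [h]
  refine mul_le_of_le_one_right hc ((le_integral hx hy
    (integrableOn_const measure_Icc_lt_top.ne) fun _ _ => zero_le_one).trans ?_)
  simp

end Linear

section Density

variable {x y w : ℝ} {π : ℝ → ℝ}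

theorem mul_cint_left (hπ : IntegrableOn π 𝕀) (hx : x ∈ 𝕀) (hy : y ∈ 𝕀) :
    cint x y (fun u => π u * cint x u π) = cint x y π ^ 2 / 2 := by
  rcases le_or_gt x y with hxy | hyx
  · rw [of_le hxy, of_le hxy, ← intervalIntegral.integral_mul_primitive
      (hπ.intervalIntegrable_of_mem_Icc hx hy)]
    refine intervalIntegral.integral_congr fun u hu => ?_
    rw [uIcc_of_le hxy] at hu
    simp only [of_le hu.1]
  · have hright : ∫ u in x..1, π u * cint x u π = (∫ u in x..1, π u) ^ 2 / 2 := by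
      rw [← intervalIntegral.integral_mul_primitive
        (hπ.intervalIntegrable_of_mem_Icc hx unitInterval.one_mem)]
      refine intervalIntegral.integral_congr fun u hu => ?_
      rw [uIcc_of_le hx.2] at hu
      simp only [of_le hu.1]
    have hleft : ∫ u in (0 : ℝ)..y, π u * cint x u π
        = (∫ u in x..1, π u) * (∫ u in (0 : ℝ)..y, π u) + (∫ u in (0 : ℝ)..y, π u) ^ 2 / 2 := by
      rw [← intervalIntegral.integral_mul_const_add_primitive
        (hπ.intervalIntegrable_of_mem_Icc unitInterval.zero_mem hy)]
      refine intervalIntegral.integral_congr fun u hu => ?_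
      rw [uIcc_of_le hy.1] at hu
      simp only [of_lt (hu.2.trans_lt hyx)]
    rw [of_lt hyx, of_lt hyx, hright, hleft]
    ring

theorem mul_cint_right (hπ : IntegrableOn π 𝕀) (hx : x ∈ 𝕀) (hy : y ∈ 𝕀) :
    cint x y (fun u => π u * cint y u π)
      = ((∫ u in (0 : ℝ)..1, π u) - cint x y π) * cint x y π + cint x y π ^ 2 / 2 := by
  have ii : ∀ a ∈ 𝕀, ∀ b ∈ 𝕀, IntervalIntegrable π volume a b :=
    fun a ha b hb => hπ.intervalIntegrable_of_mem_Icc ha hb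
  have adj : ∀ a ∈ 𝕀, ∀ b ∈ 𝕀, ∀ c ∈ 𝕀,
      (∫ u in a..b, π u) + ∫ u in b..c, π u = ∫ u in a..c, π u := fun a ha b hb c hc =>
    intervalIntegral.integral_add_adjacent_intervals (ii a ha b hb) (ii b hb c hc)
  have h0 := unitInterval.zero_mem
  have h1 := unitInterval.one_mem
  have hne : ∀ᵐ u : ℝ, u ≠ y := by simp [ae_iff, measure_singleton]
  rcases le_or_gt x y with hxy | hyx
  · rw [of_le hxy, of_le hxy, ← intervalIntegral.integral_mul_const_add_primitive (ii x hx y hy)]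
    refine intervalIntegral.integral_congr_ae ?_
    filter_upwards [hne] with u huy hu
    rw [uIoc_of_le hxy] at hu
    have hu' : u ∈ 𝕀 := ⟨hx.1.trans hu.1.le, hu.2.trans hy.2⟩
    rw [of_lt (lt_of_le_of_ne hu.2 huy)]
    congr 1
    linarith [adj 0 h0 x hx u hu', adj 0 h0 u hu' y hy, adj 0 h0 y hy 1 h1, adj x hx u hu' y hy]
  · have hright : ∫ u in x..1, π u * cint y u π
        = (∫ u in y..x, π u) * (∫ u in x..1, π u) + (∫ u in x..1, π u) ^ 2 / 2 := by
      rw [← intervalIntegral.integral_mul_const_add_primitive (ii x hx 1 h1)]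
      refine intervalIntegral.integral_congr fun u hu => ?_
      rw [uIcc_of_le hx.2] at hu
      rw [of_le (hyx.le.trans hu.1), adj y hy x hx u ⟨hx.1.trans hu.1, hu.2⟩]
    have hleft : ∫ u in (0 : ℝ)..y, π u * cint y u π
        = (∫ u in y..1, π u) * (∫ u in (0 : ℝ)..y, π u) + (∫ u in (0 : ℝ)..y, π u) ^ 2 / 2 := by
      rw [← intervalIntegral.integral_mul_const_add_primitive (ii 0 h0 y hy)]
      refine intervalIntegral.integral_congr_ae ?_
      filter_upwards [hne] with u huy hu
      rw [uIoc_of_le hy.1] at hu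
      rw [of_lt (lt_of_le_of_ne hu.2 huy)]
    rw [of_lt hyx, of_lt hyx, hright, hleft, ← adj y hy x hx 1 h1, ← adj 0 h0 y hy 1 h1,
      ← adj y hy x hx 1 h1]
    ring

theorem integrableOn_mul_cint (hπ : Integrable π) (hπnn : ∀ u ∈ 𝕀, 0 ≤ π u) (hw : w ∈ 𝕀) :
    IntegrableOn (fun u => π u * cint w u π) 𝕀 := by
  have hprim : ∀ a, Continuous fun u => ∫ v in a..u, π v := fun a =>
    intervalIntegral.continuous_primitive (fun _ _ => hπ.intervalIntegrable) a
  have hmeas : Measurable fun u => cint w u π :=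
    Measurable.ite (measurableSet_le measurable_const measurable_id) (hprim w).measurable
      (measurable_const.add (hprim 0).measurable)
  refine hπ.integrableOn.mul_bdd hmeas.aestronglyMeasurable (c := ∫ u in (0 : ℝ)..1, π u) ?_
  refine ae_restrict_of_forall_mem measurableSet_Icc fun u hu => ?_
  rw [Real.norm_eq_abs, abs_of_nonneg (nonneg hw hu hπnn)]
  exact le_integral hw hu hπ.integrableOn hπnn

theorem le_of_le_affine {h : ℝ → ℝ} {ρ α β B : ℝ} (hπ : Integrable π)
    (hπnn : ∀ u ∈ 𝕀, 0 ≤ π u) (hw : w ∈ 𝕀) (hx : x ∈ 𝕀) (hy : y ∈ 𝕀)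
    (hh : IntegrableOn h 𝕀) (hle : ∀ u ∈ 𝕀, h u ≤ ρ * π u * (α + β * cint w u π) + B) :
    cint x y h ≤ ρ * (α * cint x y π + β * cint x y (fun u => π u * cint w u π))
      + B * cint x y (fun _ => 1) := by
  have h₁ : IntegrableOn (fun u => ρ * α * π u) 𝕀 := hπ.integrableOn.const_mul _
  have h₂ := (integrableOn_mul_cint hπ hπnn hw).const_mul (ρ * β)
  have h₁₂ : IntegrableOn (fun u => ρ * α * π u + ρ * β * (π u * cint w u π)) 𝕀 := h₁.add h₂
  have h₃ : IntegrableOn (fun _ => B * 1) 𝕀 := integrableOn_const measure_Icc_lt_top.ne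
  calc cint x y h
      ≤ cint x y (fun u => (ρ * α * π u + ρ * β * (π u * cint w u π)) + B * 1) :=
        mono hx hy hh (h₁₂.add h₃) fun u hu => (hle u hu).trans_eq (by ring)
    _ = _ := by
        rw [add hx hy h₁₂ h₃, add hx hy h₁ h₂, const_mul, const_mul, const_mul]
        ring

end Density

end cint

def IsCircularSolution (ρ : ℝ) (π : ℝ → ℝ) (b g : ℝ → ℝ → ℝ) : Prop :=
  ∀ x ∈ 𝕀, ∀ y ∈ 𝕀, g x y = ρ * π y * cint x y (fun u => g x u + g y u) + b x y

def HasCintBound (ρ B : ℝ) (π : ℝ → ℝ) (g : ℝ → ℝ → ℝ) (α β : ℝ) : Prop :=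
  ∀ x ∈ 𝕀, ∀ y ∈ 𝕀, |g x y| ≤ ρ * π y * (α + β * cint x y π) + B

section

variable {ρ B G α β : ℝ} {π : ℝ → ℝ} {b g : ℝ → ℝ → ℝ}

theorem IsCircularSolution.abs_le (hsol : IsCircularSolution ρ π b g) (hρ : 0 ≤ ρ)
    (hπnn : ∀ u ∈ 𝕀, 0 ≤ π u) (hbB : ∀ x ∈ 𝕀, ∀ y ∈ 𝕀, |b x y| ≤ B)
    (hg : ∀ w ∈ 𝕀, IntegrableOn (g w) 𝕀) {x y : ℝ} (hx : x ∈ 𝕀) (hy : y ∈ 𝕀) :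
    |g x y| ≤ ρ * π y * (cint x y (fun u => |g x u|) + cint x y (fun u => |g y u|)) + B := by
  have hρπ : 0 ≤ ρ * π y := mul_nonneg hρ (hπnn y hy)
  calc |g x y| = |ρ * π y * (cint x y (g x) + cint x y (g y)) + b x y| := by
        rw [hsol x hx y hy, cint.add hx hy (hg x hx) (hg y hy)]
    _ ≤ ρ * π y * |cint x y (g x) + cint x y (g y)| + |b x y| := by
        rw [← abs_of_nonneg hρπ, ← abs_mul, abs_of_nonneg hρπ]
        exact abs_add_le _ _
    _ ≤ _ := add_le_add (mul_le_mul_of_nonneg_left ((abs_add_le _ _).trans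
        (add_le_add (cint.abs_le hx hy) (cint.abs_le hx hy))) hρπ) (hbB x hx y hy)

theorem IsCircularSolution.hasCintBound_of_abs_le (hsol : IsCircularSolution ρ π b g)
    (hρ : 0 ≤ ρ) (hπnn : ∀ u ∈ 𝕀, 0 ≤ π u) (hbB : ∀ x ∈ 𝕀, ∀ y ∈ 𝕀, |b x y| ≤ B)
    (hg : ∀ w ∈ 𝕀, IntegrableOn (g w) 𝕀) (hG : ∀ x ∈ 𝕀, ∀ y ∈ 𝕀, |g x y| ≤ G) :
    HasCintBound ρ B π g (2 * G) 0 := by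
  intro x hx y hy
  have hG0 : 0 ≤ G := (abs_nonneg _).trans (hG x hx y hy)
  have hcint : ∀ w ∈ 𝕀, cint x y (fun u => |g w u|) ≤ G := fun w hw =>
    (cint.mono hx hy (hg w hw).abs (integrableOn_const measure_Icc_lt_top.ne)
      fun u hu => hG w hw u hu).trans (cint.const_le hx hy hG0)
  rw [zero_mul, add_zero]
  refine (hsol.abs_le hρ hπnn hbB hg hx hy).trans (add_le_add_left ?_ B)
  exact mul_le_mul_of_nonneg_left (by linarith [hcint x hx, hcint y hy])
    (mul_nonneg hρ (hπnn y hy))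

theorem HasCintBound.step (h : HasCintBound ρ B π g α β) (hsol : IsCircularSolution ρ π b g)
    (hρ : 0 ≤ ρ) (hπ : Integrable π) (hπnn : ∀ u ∈ 𝕀, 0 ≤ π u)
    (hπ1 : ∫ u in (0 : ℝ)..1, π u = 1) (hbB : ∀ x ∈ 𝕀, ∀ y ∈ 𝕀, |b x y| ≤ B)
    (hg : ∀ w ∈ 𝕀, IntegrableOn (g w) 𝕀) :
    HasCintBound ρ B π g (2 * B) (ρ * (2 * α + β)) := by
  intro x hx y hy
  have hB : 0 ≤ B := (abs_nonneg _).trans (hbB x hx y hy)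
  have hgx := cint.le_of_le_affine hπ hπnn hx hx hy (hg x hx).abs fun u hu => h x hx u hu
  have hgy := cint.le_of_le_affine hπ hπnn hy hx hy (hg y hy).abs fun u hu => h y hy u hu
  rw [cint.mul_cint_left hπ.integrableOn hx hy] at hgx
  rw [cint.mul_cint_right hπ.integrableOn hx hy, hπ1] at hgy
  have hlen : B * cint x y (fun _ => 1) ≤ B :=
    mul_le_of_le_one_right hB (cint.const_le hx hy zero_le_one)
  have hsum : cint x y (fun u => |g x u|) + cint x y (fun u => |g y u|)
      ≤ 2 * B + ρ * (2 * α + β) * cint x y π := by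
    linear_combination hgx + hgy + 2 * hlen
  refine (hsol.abs_le hρ hπnn hbB hg hx hy).trans (add_le_add_left ?_ B)
  exact mul_le_mul_of_nonneg_left hsum (mul_nonneg hρ (hπnn y hy))

theorem HasCintBound.mono_right {β' : ℝ} (h : HasCintBound ρ B π g α β) (hρ : 0 ≤ ρ)
    (hπnn : ∀ u ∈ 𝕀, 0 ≤ π u) (hββ' : β ≤ β') : HasCintBound ρ B π g α β' := by
  intro x hx y hy
  refine (h x hx y hy).trans (add_le_add_left (mul_le_mul_of_nonneg_left ?_
    (mul_nonneg hρ (hπnn y hy))) B)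
  exact add_le_add le_rfl (mul_le_mul_of_nonneg_right hββ' (cint.nonneg hx hy hπnn))

theorem HasCintBound.of_forall_pow {c : ℝ} (hρ : 0 ≤ ρ) (hρ1 : ρ < 1)
    (h : ∀ n : ℕ, HasCintBound ρ B π g α (β + ρ ^ n * c)) : HasCintBound ρ B π g α β := by
  intro x hx y hy
  have hlim : Filter.Tendsto (fun n : ℕ => ρ * π y * (α + β * cint x y π) + B
      + ρ ^ n * (ρ * π y * c * cint x y π)) Filter.atTop
      (nhds (ρ * π y * (α + β * cint x y π) + B)) := by
    simpa using ((tendsto_pow_atTop_nhds_zero_of_lt_one hρ hρ1).mul_const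
      (ρ * π y * c * cint x y π)).const_add (ρ * π y * (α + β * cint x y π) + B)
  exact ge_of_tendsto' hlim fun n => (h n x hx y hy).trans_eq (by ring)

theorem HasCintBound.fixedPoint {β₀ : ℝ} (h : HasCintBound ρ B π g (2 * B) β₀)
    (hsol : IsCircularSolution ρ π b g) (hρ : ρ ∈ Ioo (0 : ℝ) 1) (hπ : Integrable π)
    (hπnn : ∀ u ∈ 𝕀, 0 ≤ π u) (hπ1 : ∫ u in (0 : ℝ)..1, π u = 1)
    (hbB : ∀ x ∈ 𝕀, ∀ y ∈ 𝕀, |b x y| ≤ B) (hg : ∀ w ∈ 𝕀, IntegrableOn (g w) 𝕀) :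
    HasCintBound ρ B π g (2 * B) (4 * ρ * B / (1 - ρ)) := by
  obtain ⟨hρ0, hρ1⟩ := hρ
  have hB : 0 ≤ B := (abs_nonneg _).trans
    (hbB 0 unitInterval.zero_mem 0 unitInterval.zero_mem)
  refine HasCintBound.of_forall_pow hρ0.le hρ1 (c := β₀) fun n => ?_
  induction n with
  | zero =>
    refine h.mono_right hρ0.le hπnn ?_
    have : 0 ≤ 4 * ρ * B / (1 - ρ) := div_nonneg (by positivity) (by linarith)
    linarith [pow_zero ρ]
  | succ n ih =>
    have e : ρ * (2 * (2 * B) + (4 * ρ * B / (1 - ρ) + ρ ^ n * β₀))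
        = 4 * ρ * B / (1 - ρ) + ρ ^ (n + 1) * β₀ := by
      field_simp [(by linarith : (1 - ρ) ≠ 0)]
      ring
    simpa only [e] using ih.step hsol hρ0.le hπ hπnn hπ1 hbB hg

end

theorem integrable_indicator_Icc_of_integral_ne_zero {f : ℝ → ℝ} {a b : ℝ} (hab : a ≤ b)
    (hf : ∫ u in a..b, f u ≠ 0) : Integrable (indicator (Icc a b) f) := by
  have hfi := intervalIntegral.intervalIntegrable_of_integral_ne_zero hf
  rw [intervalIntegrable_iff', uIcc_of_le hab] at hfi
  exact (integrable_indicator_iff measurableSet_Icc).2 hfi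

theorem abs_le_iSup_abs {b : ℝ → ℝ → ℝ} {M : ℝ} (hnn : ∀ x ∈ 𝕀, ∀ y ∈ 𝕀, 0 ≤ b x y)
    (hM : ∀ x ∈ 𝕀, ∀ y ∈ 𝕀, b x y ≤ M) {x y : ℝ} (hx : x ∈ 𝕀) (hy : y ∈ 𝕀) :
    |b x y| ≤ ⨆ q : 𝕀 × 𝕀, |b q.1 q.2| := by
  refine le_ciSup (f := fun q : 𝕀 × 𝕀 => |b q.1 q.2|) ⟨M, ?_⟩ (⟨x, hx⟩, ⟨y, hy⟩)
  rintro _ ⟨q, rfl⟩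
  exact (abs_of_nonneg (hnn _ q.1.2 _ q.2.2)).trans_le (hM _ q.1.2 _ q.2.2)

theorem a_priori_bound_for_g_general
    (ρ : ℝ) (hρ : ρ ∈ Set.Ioo (0 : ℝ) 1)
    (π : ℝ → ℝ)
    (hπnn : ∀ x ∈ Set.Icc (0 : ℝ) 1, 0 ≤ π x)
    (hπint : (∫ u in (0 : ℝ)..1, π u) = 1)
    (b : ℝ → ℝ → ℝ)
    (hbnn : ∀ x ∈ Set.Icc (0 : ℝ) 1, ∀ y ∈ Set.Icc (0 : ℝ) 1, 0 ≤ b x y)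
    (hbbd : ∃ M : ℝ, ∀ x ∈ Set.Icc (0 : ℝ) 1, ∀ y ∈ Set.Icc (0 : ℝ) 1, b x y ≤ M)
    (Bnorm : ℝ)
    (hBnorm : Bnorm = ⨆ q : Set.Icc (0 : ℝ) 1 × Set.Icc (0 : ℝ) 1,
      |b (q.1 : ℝ) (q.2 : ℝ)|)
    (g : ℝ → ℝ → ℝ)
    (hgmeas : Measurable (Function.uncurry g))
    (hgbd : ∃ M : ℝ, ∀ x ∈ Set.Icc (0 : ℝ) 1, ∀ y ∈ Set.Icc (0 : ℝ) 1, |g x y| ≤ M)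
    (heq : ∀ x ∈ Set.Icc (0 : ℝ) 1, ∀ y ∈ Set.Icc (0 : ℝ) 1,
      g x y = ρ * π y * cint x y (fun u => g x u + g y u) + b x y) :
    ∀ x ∈ Set.Icc (0 : ℝ) 1, ∀ y ∈ Set.Icc (0 : ℝ) 1,
      |g x y| ≤ Bnorm + 2 * ρ * (1 + ρ) * π y / (1 - ρ) * Bnorm := by
  obtain ⟨hρ0, hρ1⟩ := hρ
  obtain ⟨Mb, hMb⟩ := hbbd
  obtain ⟨G, hG⟩ := hgbd
  set π₀ := indicator 𝕀 π
  have hπ₀ : Integrable π₀ :=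
    integrable_indicator_Icc_of_integral_ne_zero zero_le_one (by rw [hπint]; exact one_ne_zero)
  have hπ₀eq : ∀ u ∈ 𝕀, π₀ u = π u := fun u hu => indicator_of_mem hu π
  have hπ₀nn : ∀ u ∈ 𝕀, 0 ≤ π₀ u := fun u hu => (hπ₀eq u hu).symm ▸ hπnn u hu
  have hπ₀1 : ∫ u in (0 : ℝ)..1, π₀ u = 1 := by
    refine (intervalIntegral.integral_congr fun u hu => hπ₀eq u ?_).trans hπint
    rwa [uIcc_of_le zero_le_one] at hu
  have hsol : IsCircularSolution ρ π₀ b g := fun x hx y hy => hπ₀eq y hy ▸ heq x hx y hy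
  have hbB : ∀ x ∈ 𝕀, ∀ y ∈ 𝕀, |b x y| ≤ Bnorm := fun x hx y hy =>
    hBnorm ▸ abs_le_iSup_abs hbnn hMb hx hy
  have hg : ∀ w ∈ 𝕀, IntegrableOn (g w) 𝕀 := fun w hw =>
    Measure.integrableOn_of_bounded (M := G) measure_Icc_lt_top.ne
      hgmeas.of_uncurry_left.aestronglyMeasurable
      (ae_restrict_of_forall_mem measurableSet_Icc fun u hu => hG w hw u hu)
  have hfix := ((hsol.hasCintBound_of_abs_le hρ0.le hπ₀nn hbB hg hG).step hsol hρ0.le hπ₀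
    hπ₀nn hπ₀1 hbB hg).fixedPoint hsol ⟨hρ0, hρ1⟩ hπ₀ hπ₀nn hπ₀1 hbB hg
  intro x hx y hy
  have hB : 0 ≤ Bnorm := (abs_nonneg _).trans (hbB x hx y hy)
  have hp : cint x y π₀ ≤ 1 := hπ₀1 ▸ cint.le_integral hx hy hπ₀.integrableOn hπ₀nn
  calc |g x y| ≤ ρ * π₀ y * (2 * Bnorm + 4 * ρ * Bnorm / (1 - ρ) * cint x y π₀) + Bnorm :=
        hfix x hx y hy
    _ ≤ ρ * π₀ y * (2 * Bnorm + 4 * ρ * Bnorm / (1 - ρ)) + Bnorm := by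
        gcongr
        · exact mul_nonneg hρ0.le (hπ₀nn y hy)
        · exact mul_le_of_le_one_right (div_nonneg (by positivity) (by linarith)) hp
    _ = Bnorm + 2 * ρ * (1 + ρ) * π y / (1 - ρ) * Bnorm := by
        rw [hπ₀eq y hy]
        field_simp [(by linarith : (1 - ρ) ≠ 0)]
        ring

/-- A priori bound for bounded measurable solutions of the circular integral
equation: `|g(x,y)| ≤ ‖b‖_∞ + (2ρ(1+ρ)π(y)/(1−ρ))·‖b‖_∞`. -/
theorem a_priori_bound_for_g
    (ρ : ℝ) (hρ : ρ ∈ Set.Ioo (0 : ℝ) 1)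
    (π : ℝ → ℝ) (hπmeas : Measurable π)
    (hπnn : ∀ x ∈ Set.Icc (0 : ℝ) 1, 0 ≤ π x)
    (hπbd : ∃ M : ℝ, ∀ x ∈ Set.Icc (0 : ℝ) 1, π x ≤ M)
    (hπint : (∫ u in (0 : ℝ)..1, π u) = 1)
    (b : ℝ → ℝ → ℝ)
    (hbmeas : Measurable (Function.uncurry b))
    (hbnn : ∀ x ∈ Set.Icc (0 : ℝ) 1, ∀ y ∈ Set.Icc (0 : ℝ) 1, 0 ≤ b x y)
    (hbbd : ∃ M : ℝ, ∀ x ∈ Set.Icc (0 : ℝ) 1, ∀ y ∈ Set.Icc (0 : ℝ) 1, b x y ≤ M)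
    (Bnorm : ℝ)
    (hBnorm : Bnorm = ⨆ q : Set.Icc (0 : ℝ) 1 × Set.Icc (0 : ℝ) 1,
      |b (q.1 : ℝ) (q.2 : ℝ)|)
    (g : ℝ → ℝ → ℝ)
    (hgmeas : Measurable (Function.uncurry g))
    (hgbd : ∃ M : ℝ, ∀ x ∈ Set.Icc (0 : ℝ) 1, ∀ y ∈ Set.Icc (0 : ℝ) 1, |g x y| ≤ M)
    (heq : ∀ x ∈ Set.Icc (0 : ℝ) 1, ∀ y ∈ Set.Icc (0 : ℝ) 1,
      g x y = ρ * π y * cint x y (fun u => g x u + g y u) + b x y) :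
    ∀ x ∈ Set.Icc (0 : ℝ) 1, ∀ y ∈ Set.Icc (0 : ℝ) 1,
      |g x y| ≤ Bnorm + 2 * ρ * (1 + ρ) * π y / (1 - ρ) * Bnorm :=
  a_priori_bound_for_g_general ρ hρ π hπnn hπint b hbnn hbbd Bnorm hBnorm g hgmeas hgbd heq
end

section
/- Let π be a bounded probability density on [0,1], let λ, K₁, B₁, B₂, K₂, α be positive reals, and set ρ = λ·K₁·B₁; assume ρ < 1. Suppose f : [0,1]² → ℝ is integrable and satisfies, for all x, y ∈ [0,1], [ρ·π(y) + 1−ρ]·f(x,y) = ρ·∫*_{u=x}^{y} [ρ·π(u) + 1−ρ]·( π(y)·f(x,u) + π(x)·f(y,u) ) du + λ·K₁·π(x)·( α·∫*_{u=x}^{y} [ρ·π(u) + 1−ρ] du + (ρ·B₂/(2B₁))·π(y) + B₁·π(y)·(K₂/K₁)·∫*_{u=x}^{y} [ρ·π(u) + 1−ρ] du ). Then ∫_0^1 ∫_0^1 [ρ·π(u) + 1−ρ]·f(x,u) dx du = (λ·K₁/(2(1−ρ)))·( α + λ·K₁·B₂ + B₁·K₂/K₁ ). -/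
/-!
Write `w = ρπ + 1 - ρ`, a probability density on `[0,1]`, and `T = ∫∫ w(u) f(x,u) dx du`.
Add the equation at `(x,y)` to the equation at `(y,x)`. Off the diagonal the two circular
integrals `∫*_x^y` and `∫*_y^x` merge into `∫_0^1`, which turns the first term into
`ρ (π(y) G(x) + π(x) G(y))` with `G(x) = ∫ w(u) f(x,u) du`, and `C(x,y) + C(y,x) = 1` for
`C(x,y) = ∫*_x^y w`. Both sides are now of the form `Q(x,y) + Q(y,x)`, and integrating over the
square halves them by swap symmetry:
`T = ρ T + λK₁α ∫∫ π(x) C(x,y) dx dy + λK₁ (λK₁B₂ + B₁K₂/K₁) / 2`.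
The remaining double integral is `1/2`: with `W` the primitive of `w`,
`C(x,y) = W(y) - W(x) + [y < x]`, and the resulting one-dimensional integrals are evaluated by
integration by parts for primitives of integrable functions, `∫ a B + ∫ A b = (∫ a) (∫ b)`.
-/

open MeasureTheory

open Set

lemma IntervalIntegrable.mono_Icc_zero_one {h : ℝ → ℝ} (hh : IntervalIntegrable h volume 0 1)
    {a b : ℝ} (ha : a ∈ Icc (0:ℝ) 1) (hb : b ∈ Icc (0:ℝ) 1) : IntervalIntegrable h volume a b :=
  hh.mono_set (uIcc_subset_uIcc (by rwa [uIcc_of_le zero_le_one]) (by rwa [uIcc_of_le zero_le_one]))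

lemma cint_eq_sub_add {h : ℝ → ℝ} (hh : IntervalIntegrable h volume 0 1) {a b : ℝ}
    (ha : a ∈ Icc (0:ℝ) 1) (hb : b ∈ Icc (0:ℝ) 1) :
    cint a b h = (∫ u in 0..b, h u) - (∫ u in 0..a, h u)
      + if a ≤ b then 0 else ∫ u in 0..1, h u := by
  have h0 : (0:ℝ) ∈ Icc (0:ℝ) 1 := left_mem_Icc.2 zero_le_one
  have h1 : (1:ℝ) ∈ Icc (0:ℝ) 1 := right_mem_Icc.2 zero_le_one
  unfold cint
  split_ifs
  · rw [intervalIntegral.integral_interval_sub_left (hh.mono_Icc_zero_one h0 hb)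
      (hh.mono_Icc_zero_one h0 ha)]
    ring
  · rw [← intervalIntegral.integral_add_adjacent_intervals (hh.mono_Icc_zero_one h0 ha)
      (hh.mono_Icc_zero_one ha h1)]
    ring

lemma cint_add_cint_swap {h : ℝ → ℝ} (hh : IntervalIntegrable h volume 0 1) {a b : ℝ}
    (ha : a ∈ Icc (0:ℝ) 1) (hb : b ∈ Icc (0:ℝ) 1) (hab : a ≠ b) :
    cint a b h + cint b a h = ∫ u in 0..1, h u := by
  rw [cint_eq_sub_add hh ha hb, cint_eq_sub_add hh hb ha]
  rcases hab.lt_or_gt with hlt | hlt <;> simp only [hlt.le, hlt.not_ge, if_true, if_false] <;> ring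

section IntegrationByParts

variable {a b : ℝ → ℝ} {s t : ℝ}

lemma integral_mul_primitive_add_primitive_mul (ha : IntervalIntegrable a volume s t)
    (hb : IntervalIntegrable b volume s t) :
    ∫ x in s..t, (a x * ∫ y in s..x, b y) + (∫ y in s..x, a y) * b x
      = (∫ x in s..t, a x) * ∫ x in s..t, b x := by
  have hs : s ∈ uIcc s t := left_mem_uIcc
  have hIBP := (ha.absolutelyContinuousOnInterval_intervalIntegral hs).integral_deriv_mul_eq_sub
    (hb.absolutelyContinuousOnInterval_intervalIntegral hs)
  simp only [intervalIntegral.integral_same, mul_zero, sub_zero] at hIBP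
  rw [← hIBP]
  refine intervalIntegral.integral_congr_ae ?_
  filter_upwards [ha.ae_hasDerivAt_integral, hb.ae_hasDerivAt_integral] with x hxa hxb hx
  have hx' : x ∈ uIcc s t := uIoc_subset_uIcc hx
  rw [(hxa hx' s hs).deriv, (hxb hx' s hs).deriv]

lemma integral_mul_primitive_self (ha : IntervalIntegrable a volume s t) :
    ∫ x in s..t, a x * ∫ y in s..x, a y = (∫ x in s..t, a x) ^ 2 / 2 := by
  have h := integral_mul_primitive_add_primitive_mul ha ha
  rw [intervalIntegral.integral_congr (g := fun x => 2 * (a x * ∫ y in s..x, a y))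
    fun x _ => by ring, intervalIntegral.integral_const_mul] at h
  linear_combination h / 2

lemma integral_mul_sub_add_integral_primitive (ha : IntervalIntegrable a volume s t) :
    (∫ x in s..t, a x * (x - s)) + ∫ x in s..t, ∫ y in s..x, a y
      = (t - s) * ∫ x in s..t, a x := by
  have h := integral_mul_primitive_add_primitive_mul ha (intervalIntegrable_const (c := 1))
  have hx : IntervalIntegrable (fun x => a x * (x - s)) volume s t :=
    ha.mul_continuousOn (by fun_prop)
  simp only [intervalIntegral.integral_const, smul_eq_mul, mul_one] at h
  rw [intervalIntegral.integral_add hx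
    (intervalIntegral.continuousOn_primitive_interval' ha left_mem_uIcc).intervalIntegrable] at h
  linear_combination h

end IntegrationByParts

lemma ae_prod_fst_ne_snd {α : Type*} [MeasurableSpace α] [MeasurableEq α]
    (μ : Measure α) [SFinite μ] [NullSingletonClass μ] : ∀ᵐ p ∂μ.prod μ, p.1 ≠ p.2 :=
  (Measure.ae_prod_iff_ae_ae (measurableSet_eq_fun measurable_fst measurable_snd).compl).2
    (ae_of_all _ fun x => (μ.ae_ne x).mono fun _ h => h.symm)

section SwapSymmetry

variable {α : Type*} [MeasurableSpace α] {μ : Measure α} [SFinite μ]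

lemma integral_prod_add_swap {F : α × α → ℝ} (hF : Integrable F (μ.prod μ)) :
    ∫ p, F p + F p.swap ∂μ.prod μ = 2 * ∫ p, F p ∂μ.prod μ := by
  rw [integral_add hF (hF.swap : Integrable (fun p => F p.swap) _), integral_prod_swap F, two_mul]

lemma integral_eq_of_add_swap_ae_eq {F Q : α × α → ℝ} (hF : Integrable F (μ.prod μ))
    (hQ : Integrable Q (μ.prod μ)) (h : ∀ᵐ p ∂μ.prod μ, F p + F p.swap = Q p + Q p.swap) :
    ∫ p, F p ∂μ.prod μ = ∫ p, Q p ∂μ.prod μ := by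
  have h2 := integral_congr_ae h
  rw [integral_prod_add_swap hF, integral_prod_add_swap hQ] at h2
  linarith

end SwapSymmetry

local notation "𝕀" => volume.restrict (Icc (0:ℝ) 1)
local notation "𝕀²" => Measure.prod 𝕀 𝕀

lemma integral_unitInterval (h : ℝ → ℝ) : ∫ x, h x ∂𝕀 = ∫ x in (0:ℝ)..1, h x := by
  rw [intervalIntegral.integral_of_le zero_le_one, integral_Icc_eq_integral_Ioc]

lemma integrable_unitInterval_iff {h : ℝ → ℝ} :
    Integrable h 𝕀 ↔ IntervalIntegrable h volume 0 1 :=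
  (intervalIntegrable_iff_integrableOn_Icc_of_le zero_le_one).symm

lemma continuousOn_primitive_unitInterval {h : ℝ → ℝ} (hh : IntervalIntegrable h volume 0 1) :
    ContinuousOn (fun x => ∫ u in (0:ℝ)..x, h u) (Icc 0 1) := by
  simpa [uIcc_of_le zero_le_one] using
    intervalIntegral.continuousOn_primitive_interval' hh left_mem_uIcc

lemma unitSquare_eq : 𝕀² = volume.restrict (Icc (0:ℝ) 1 ×ˢ Icc (0:ℝ) 1) := by
  rw [Measure.prod_restrict, Measure.volume_eq_prod]

lemma ae_mem_unitSquare : ∀ᵐ q ∂𝕀², q.1 ∈ Icc (0:ℝ) 1 ∧ q.2 ∈ Icc (0:ℝ) 1 := by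
  rw [unitSquare_eq]
  exact ae_restrict_mem (measurableSet_Icc.prod measurableSet_Icc)

lemma integral_integral_eq_integral_unitSquare {F : ℝ → ℝ → ℝ}
    (hF : Integrable (fun q : ℝ × ℝ => F q.1 q.2) 𝕀²) :
    ∫ y in (0:ℝ)..1, ∫ x in (0:ℝ)..1, F x y = ∫ q, F q.1 q.2 ∂𝕀² := by
  rw [integral_prod_symm _ hF]
  simp only [integral_unitInterval]

lemma ite_le_eq_indicator_Iio (c x y : ℝ) :
    (if x ≤ y then 0 else c) = (Iio x).indicator (fun _ => c) y := by
  by_cases h : x ≤ y <;> simp [h, indicator, not_le.1]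

lemma integrable_prod_ite_le {a : ℝ → ℝ} (ha : Integrable a 𝕀) :
    Integrable (fun q : ℝ × ℝ => if q.1 ≤ q.2 then 0 else a q.1) 𝕀² := by
  refine ((ha.comp_fst 𝕀).indicator (measurableSet_lt measurable_snd measurable_fst)).congr
    (ae_of_all _ fun q => ?_)
  simp only [ite_le_eq_indicator_Iio, indicator, mem_ofPred_eq, mem_Iio]

lemma integral_prod_ite_le {a : ℝ → ℝ} (ha : Integrable a 𝕀) :
    ∫ q, (if q.1 ≤ q.2 then 0 else a q.1) ∂𝕀² = ∫ x, a x * x ∂𝕀 := by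
  rw [integral_prod _ (integrable_prod_ite_le ha)]
  refine integral_congr_ae ((ae_restrict_mem measurableSet_Icc).mono fun x hx => ?_)
  have hIco : Iio x ∩ Icc 0 1 = Ico 0 x := by
    ext y
    simp only [mem_inter_iff, mem_Iio, mem_Icc, mem_Ico]
    exact ⟨fun h => ⟨h.2.1, h.1⟩, fun h => ⟨h.2, h.1, h.2.le.trans hx.2⟩⟩
  simp only [ite_le_eq_indicator_Iio, integral_indicator_const _ measurableSet_Iio,
    measureReal_restrict_apply measurableSet_Iio, hIco, Real.volume_real_Ico_of_le hx.1,
    smul_eq_mul, sub_zero, mul_comm]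

section CircularIntegralOfDensity

variable {p w : ℝ → ℝ}

lemma mul_cint_eq (hw : IntervalIntegrable w volume 0 1) (hw1 : ∫ u in (0:ℝ)..1, w u = 1)
    {a b : ℝ} (ha : a ∈ Icc (0:ℝ) 1) (hb : b ∈ Icc (0:ℝ) 1) :
    p a * cint a b w = p a * (∫ u in (0:ℝ)..b, w u) - p a * (∫ u in (0:ℝ)..a, w u)
      + if a ≤ b then 0 else p a := by
  rw [cint_eq_sub_add hw ha hb, hw1]
  split_ifs <;> ring

lemma integrable_mul_cint (hp : Integrable p 𝕀) (hw : IntervalIntegrable w volume 0 1)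
    (hw1 : ∫ u in (0:ℝ)..1, w u = 1) :
    Integrable (fun q : ℝ × ℝ => p q.1 * cint q.1 q.2 w) 𝕀² := by
  have hW := continuousOn_primitive_unitInterval hw
  refine (((hp.mul_prod hW.integrableOn_Icc).sub
      ((IntegrableOn.mul_continuousOn hp hW isCompact_Icc).comp_fst 𝕀)).add
    (integrable_prod_ite_le hp)).congr (ae_mem_unitSquare.mono fun q hq => ?_)
  exact (mul_cint_eq hw hw1 hq.1 hq.2).symm

lemma integral_mul_cint (hp : Integrable p 𝕀) (hw : IntervalIntegrable w volume 0 1)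
    (hw1 : ∫ u in (0:ℝ)..1, w u = 1) :
    ∫ q, p q.1 * cint q.1 q.2 w ∂𝕀²
      = (∫ x, p x ∂𝕀) * (∫ x, (∫ u in (0:ℝ)..x, w u) ∂𝕀)
        - (∫ x, p x * (∫ u in (0:ℝ)..x, w u) ∂𝕀) + ∫ x, p x * x ∂𝕀 := by
  have hW := continuousOn_primitive_unitInterval hw
  have hWint : Integrable (fun x => ∫ u in (0:ℝ)..x, w u) 𝕀 := hW.integrableOn_Icc
  have h₁ := hp.mul_prod hWint
  have h₂ := (IntegrableOn.mul_continuousOn hp hW isCompact_Icc).comp_fst 𝕀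
  rw [integral_congr_ae (ae_mem_unitSquare.mono fun q hq => mul_cint_eq hw hw1 hq.1 hq.2),
    integral_add ?_ (integrable_prod_ite_le hp), integral_sub h₁ h₂,
    integral_prod_mul p (fun x => ∫ u in (0:ℝ)..x, w u),
    integral_fun_fst (fun x => p x * ∫ u in (0:ℝ)..x, w u), integral_prod_ite_le hp]
  · simp
  · exact h₁.sub h₂

end CircularIntegralOfDensity

def serverDensity (ρ : ℝ) (π : ℝ → ℝ) (u : ℝ) : ℝ := ρ * π u + (1 - ρ)

section ServerDensity

variable {π : ℝ → ℝ} {ρ : ℝ}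

lemma intervalIntegrable_serverDensity (hπ : IntervalIntegrable π volume 0 1) :
    IntervalIntegrable (serverDensity ρ π) volume 0 1 :=
  (hπ.const_mul ρ).add intervalIntegrable_const

lemma primitive_serverDensity (hπ : IntervalIntegrable π volume 0 1) {x : ℝ}
    (hx : x ∈ Icc (0:ℝ) 1) :
    ∫ u in (0:ℝ)..x, serverDensity ρ π u = ρ * (∫ u in (0:ℝ)..x, π u) + (1 - ρ) * x := by
  simp only [serverDensity]
  rw [intervalIntegral.integral_add
    ((hπ.mono_Icc_zero_one (left_mem_Icc.2 zero_le_one) hx).const_mul ρ) intervalIntegrable_const,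
    intervalIntegral.integral_const_mul, intervalIntegral.integral_const, smul_eq_mul, sub_zero]
  ring

lemma integral_serverDensity (hπ : IntervalIntegrable π volume 0 1)
    (hπ1 : ∫ u in (0:ℝ)..1, π u = 1) : ∫ u in (0:ℝ)..1, serverDensity ρ π u = 1 := by
  rw [primitive_serverDensity hπ (right_mem_Icc.2 zero_le_one), hπ1]
  ring

lemma integral_primitive_serverDensity_sub_add (hπ : IntervalIntegrable π volume 0 1)
    (hπ1 : ∫ u in (0:ℝ)..1, π u = 1) :
    (∫ x in (0:ℝ)..1, ∫ u in (0:ℝ)..x, serverDensity ρ π u)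
      - (∫ x in (0:ℝ)..1, π x * ∫ u in (0:ℝ)..x, serverDensity ρ π u)
      + ∫ x in (0:ℝ)..1, π x * x = 1 / 2 := by
  have hP := intervalIntegral.continuousOn_primitive_interval' hπ left_mem_uIcc
  have hW : EqOn (fun x => ∫ u in (0:ℝ)..x, serverDensity ρ π u)
      (fun x => ρ * (∫ u in (0:ℝ)..x, π u) + (1 - ρ) * x) (uIcc 0 1) := by
    rw [uIcc_of_le zero_le_one]; exact fun x hx => primitive_serverDensity hπ hx
  have hπW : EqOn (fun x => π x * ∫ u in (0:ℝ)..x, serverDensity ρ π u)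
      (fun x => ρ * (π x * ∫ u in (0:ℝ)..x, π u) + (1 - ρ) * (π x * x)) (uIcc 0 1) :=
    fun x hx => by simp only [hW hx]; ring
  have hπx : IntervalIntegrable (fun x => π x * x) volume 0 1 :=
    hπ.mul_continuousOn continuousOn_id
  rw [intervalIntegral.integral_congr hW, intervalIntegral.integral_congr hπW,
    intervalIntegral.integral_add (hP.intervalIntegrable.const_mul ρ)
      (intervalIntegral.intervalIntegrable_id.const_mul _),
    intervalIntegral.integral_add ((hπ.mul_continuousOn hP).const_mul ρ) (hπx.const_mul _),
    intervalIntegral.integral_const_mul, intervalIntegral.integral_const_mul,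
    intervalIntegral.integral_const_mul, intervalIntegral.integral_const_mul, integral_id,
    integral_mul_primitive_self hπ, hπ1]
  have hbyparts := integral_mul_sub_add_integral_primitive hπ
  simp only [sub_zero, hπ1] at hbyparts
  linear_combination ρ * hbyparts

lemma integral_mul_cint_serverDensity (hπ : Integrable π 𝕀) (hπ1 : ∫ u in (0:ℝ)..1, π u = 1) :
    ∫ q, π q.1 * cint q.1 q.2 (serverDensity ρ π) ∂𝕀² = 1 / 2 := by
  have hπ' := integrable_unitInterval_iff.1 hπ
  rw [integral_mul_cint hπ (intervalIntegrable_serverDensity hπ') (integral_serverDensity hπ' hπ1)]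
  simp only [integral_unitInterval]
  rw [hπ1, one_mul]
  exact integral_primitive_serverDensity_sub_add hπ' hπ1

lemma integrable_serverDensity_mul {M : ℝ} {f : ℝ → ℝ → ℝ} (hπ : Measurable π)
    (hM : ∀ x ∈ Icc (0:ℝ) 1, |π x| ≤ M)
    (hf : IntegrableOn (Function.uncurry f) (Icc (0:ℝ) 1 ×ˢ Icc (0:ℝ) 1)) :
    Integrable (fun q : ℝ × ℝ => serverDensity ρ π q.2 * f q.1 q.2) 𝕀² := by
  rw [unitSquare_eq]
  refine hf.bdd_mul (c := |ρ| * M + |1 - ρ|)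
    (((hπ.const_mul ρ).add_const _).comp measurable_snd).aestronglyMeasurable ?_
  filter_upwards [ae_restrict_mem (measurableSet_Icc.prod measurableSet_Icc)] with q hq
  calc ‖serverDensity ρ π q.2‖ ≤ |ρ| * |π q.2| + |1 - ρ| := by
        rw [Real.norm_eq_abs, serverDensity, ← abs_mul]; exact abs_add_le _ _
    _ ≤ |ρ| * M + |1 - ρ| := by gcongr; exact hM _ hq.2

end ServerDensity

noncomputable def waitingDensity (ρ : ℝ) (π : ℝ → ℝ) (f : ℝ → ℝ → ℝ) (x : ℝ) : ℝ :=
  ∫ u, serverDensity ρ π u * f x u ∂𝕀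

def IsMeanSpreadSolution (π : ℝ → ℝ) (lam K₁ B₁ B₂ K₂ α ρ : ℝ) (f : ℝ → ℝ → ℝ) : Prop :=
  ∀ x ∈ Icc (0 : ℝ) 1, ∀ y ∈ Icc (0 : ℝ) 1,
    serverDensity ρ π y * f x y
      = ρ * cint x y (fun u => serverDensity ρ π u * (π y * f x u + π x * f y u))
        + lam * K₁ * π x *
          (α * cint x y (serverDensity ρ π) + ρ * B₂ / (2 * B₁) * π y
            + B₁ * π y * (K₂ / K₁) * cint x y (serverDensity ρ π))

/-- The terms in `π x * π y`, symmetric once the circular integrals are merged, are split evenly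
between `(x, y)` and `(y, x)`. -/
noncomputable def symmetrizedRhs (π : ℝ → ℝ) (lam K₁ B₁ B₂ K₂ α ρ : ℝ) (f : ℝ → ℝ → ℝ)
    (q : ℝ × ℝ) : ℝ :=
  ρ * (waitingDensity ρ π f q.1 * π q.2)
    + lam * K₁ * α * (π q.1 * cint q.1 q.2 (serverDensity ρ π))
    + lam * K₁ * (ρ * B₂ / (2 * B₁) + B₁ * (K₂ / K₁) / 2) * (π q.1 * π q.2)

namespace IsMeanSpreadSolution

variable {π : ℝ → ℝ} {lam K₁ B₁ B₂ K₂ α ρ : ℝ} {f : ℝ → ℝ → ℝ}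

lemma add_swap_eq_symmetrizedRhs (h : IsMeanSpreadSolution π lam K₁ B₁ B₂ K₂ α ρ f)
    (hπ : Integrable π 𝕀) (hπ1 : ∫ u in (0:ℝ)..1, π u = 1) {x y : ℝ}
    (hx : x ∈ Icc (0:ℝ) 1) (hy : y ∈ Icc (0:ℝ) 1) (hxy : x ≠ y)
    (hfx : Integrable (fun u => serverDensity ρ π u * f x u) 𝕀)
    (hfy : Integrable (fun u => serverDensity ρ π u * f y u) 𝕀) :
    serverDensity ρ π y * f x y + serverDensity ρ π x * f y x
      = symmetrizedRhs π lam K₁ B₁ B₂ K₂ α ρ f (x, y)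
        + symmetrizedRhs π lam K₁ B₁ B₂ K₂ α ρ f (y, x) := by
  have hπ' := integrable_unitInterval_iff.1 hπ
  have hxy' := h x hx y hy
  have hyx := h y hy x hx
  have hsplit_xy : (fun u => serverDensity ρ π u * (π y * f x u + π x * f y u))
      = fun u => π y * (serverDensity ρ π u * f x u) + π x * (serverDensity ρ π u * f y u) :=
    funext fun u => by ring
  have hsplit_yx : (fun u => serverDensity ρ π u * (π x * f y u + π y * f x u))
      = fun u => π y * (serverDensity ρ π u * f x u) + π x * (serverDensity ρ π u * f y u) :=
    funext fun u => by ring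
  rw [hsplit_xy] at hxy'
  rw [hsplit_yx] at hyx
  have hH : Integrable
      (fun u => π y * (serverDensity ρ π u * f x u) + π x * (serverDensity ρ π u * f y u)) 𝕀 :=
    (hfx.const_mul _).add (hfy.const_mul _)
  have hmerge := cint_add_cint_swap (integrable_unitInterval_iff.1 hH) hx hy hxy
  rw [← integral_unitInterval, integral_add (hfx.const_mul _) (hfy.const_mul _),
    integral_const_mul, integral_const_mul] at hmerge
  have hC := cint_add_cint_swap (intervalIntegrable_serverDensity (ρ := ρ) hπ') hx hy hxy
  rw [integral_serverDensity hπ' hπ1] at hC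
  simp only [symmetrizedRhs, waitingDensity]
  linear_combination hxy' + hyx + ρ * hmerge + lam * K₁ * B₁ * (K₂ / K₁) * π x * π y * hC

lemma integral_eq_mul_integral_add (h : IsMeanSpreadSolution π lam K₁ B₁ B₂ K₂ α ρ f)
    (hπ : Integrable π 𝕀) (hπ1 : ∫ u in (0:ℝ)..1, π u = 1)
    (hg : Integrable (fun q : ℝ × ℝ => serverDensity ρ π q.2 * f q.1 q.2) 𝕀²) :
    ∫ q, serverDensity ρ π q.2 * f q.1 q.2 ∂𝕀²
      = ρ * ∫ q, serverDensity ρ π q.2 * f q.1 q.2 ∂𝕀²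
        + lam * K₁ * α / 2 + lam * K₁ * (ρ * B₂ / (2 * B₁) + B₁ * (K₂ / K₁) / 2) := by
  have hG : Integrable (waitingDensity ρ π f) 𝕀 := hg.integral_prod_left
  have hGT : ∫ x, waitingDensity ρ π f x ∂𝕀 = ∫ q, serverDensity ρ π q.2 * f q.1 q.2 ∂𝕀² :=
    (integral_prod _ hg).symm
  have hπ' := integrable_unitInterval_iff.1 hπ
  have hC := integrable_mul_cint hπ (intervalIntegrable_serverDensity (ρ := ρ) hπ')
    (integral_serverDensity hπ' hπ1)
  have hQ : Integrable (symmetrizedRhs π lam K₁ B₁ B₂ K₂ α ρ f) 𝕀² :=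
    (((hG.mul_prod hπ).const_mul ρ).add (hC.const_mul _)).add ((hπ.mul_prod hπ).const_mul _)
  have hQval : ∫ q, symmetrizedRhs π lam K₁ B₁ B₂ K₂ α ρ f q ∂𝕀²
      = ρ * ∫ q, serverDensity ρ π q.2 * f q.1 q.2 ∂𝕀²
        + lam * K₁ * α / 2 + lam * K₁ * (ρ * B₂ / (2 * B₁) + B₁ * (K₂ / K₁) / 2) := by
    simp only [symmetrizedRhs]
    rw [integral_add ?_ ((hπ.mul_prod hπ).const_mul _),
      integral_add ((hG.mul_prod hπ).const_mul ρ) (hC.const_mul _),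
      integral_const_mul, integral_const_mul, integral_const_mul, integral_prod_mul,
      integral_prod_mul, integral_mul_cint_serverDensity hπ hπ1, hGT,
      integral_unitInterval, hπ1]
    · ring
    · exact ((hG.mul_prod hπ).const_mul ρ).add (hC.const_mul _)
  rw [← hQval]
  have hsecs := hg.prod_right_ae
  refine integral_eq_of_add_swap_ae_eq hg hQ ?_
  filter_upwards [ae_mem_unitSquare, ae_prod_fst_ne_snd 𝕀,
    Measure.quasiMeasurePreserving_fst.ae hsecs, Measure.quasiMeasurePreserving_snd.ae hsecs]
    with q hq hne hfx hfy
  exact h.add_swap_eq_symmetrizedRhs hπ hπ1 hq.1 hq.2 hne hfx hfy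

end IsMeanSpreadSolution

theorem integral_equation_gives_mean_queue_length_general
    (π : ℝ → ℝ) (hπmeas : Measurable π)
    (hπnn : ∀ x ∈ Set.Icc (0 : ℝ) 1, 0 ≤ π x)
    (hπbd : ∃ M : ℝ, ∀ x ∈ Set.Icc (0 : ℝ) 1, π x ≤ M)
    (hπint : (∫ u in (0 : ℝ)..1, π u) = 1)
    (lam K₁ B₁ B₂ K₂ α ρ : ℝ)
    (hB₁ : 0 < B₁)
    (hρdef : ρ = lam * K₁ * B₁) (hρ1 : ρ < 1)
    (f : ℝ → ℝ → ℝ)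
    (hfint : IntegrableOn (Function.uncurry f)
      (Set.Icc (0 : ℝ) 1 ×ˢ Set.Icc (0 : ℝ) 1))
    (heq : ∀ x ∈ Set.Icc (0 : ℝ) 1, ∀ y ∈ Set.Icc (0 : ℝ) 1,
      (ρ * π y + (1 - ρ)) * f x y
        = ρ * cint x y (fun u => (ρ * π u + (1 - ρ)) * (π y * f x u + π x * f y u))
          + lam * K₁ * π x *
            (α * cint x y (fun u => ρ * π u + (1 - ρ))
              + ρ * B₂ / (2 * B₁) * π y
              + B₁ * π y * (K₂ / K₁) * cint x y (fun u => ρ * π u + (1 - ρ)))) :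
    (∫ u in (0 : ℝ)..1, ∫ x in (0 : ℝ)..1, (ρ * π u + (1 - ρ)) * f x u)
      = lam * K₁ / (2 * (1 - ρ)) * (α + lam * K₁ * B₂ + B₁ * K₂ / K₁) := by
  obtain ⟨M, hM⟩ := hπbd
  have hπM : ∀ x ∈ Icc (0:ℝ) 1, |π x| ≤ M :=
    fun x hx => (abs_of_nonneg (hπnn x hx)).trans_le (hM x hx)
  have hπ : Integrable π 𝕀 := Integrable.of_bound hπmeas.aestronglyMeasurable M
    (ae_restrict_of_forall_mem measurableSet_Icc hπM)
  have hg := integrable_serverDensity_mul (ρ := ρ) hπmeas hπM hfint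
  have key := IsMeanSpreadSolution.integral_eq_mul_integral_add heq hπ hπint hg
  have hρB : ρ * B₂ / (2 * B₁) = lam * K₁ * B₂ / 2 := by
    rw [hρdef]; field_simp
  rw [hρB] at key
  simp only [serverDensity] at key
  rw [integral_integral_eq_integral_unitSquare hg, div_mul_eq_mul_div, eq_div_iff (by linarith)]
  linear_combination 2 * key

/-- Any integrable solution `f` of the full integral equation for the mean
customer-spread function yields the correct mean number of waiting customers:
`∫_0^1 ∫_0^1 [ρπ(u)+1−ρ]·f(x,u) dx du
  = (λK₁/(2(1−ρ)))·(α + λK₁B₂ + B₁K₂/K₁)`. -/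
theorem integral_equation_gives_mean_queue_length
    (π : ℝ → ℝ) (hπmeas : Measurable π)
    (hπnn : ∀ x ∈ Set.Icc (0 : ℝ) 1, 0 ≤ π x)
    (hπbd : ∃ M : ℝ, ∀ x ∈ Set.Icc (0 : ℝ) 1, π x ≤ M)
    (hπint : (∫ u in (0 : ℝ)..1, π u) = 1)
    (lam K₁ B₁ B₂ K₂ α ρ : ℝ)
    (hlam : 0 < lam) (hK₁ : 0 < K₁) (hB₁ : 0 < B₁) (hB₂ : 0 < B₂)
    (hK₂ : 0 < K₂) (hα : 0 < α)
    (hρdef : ρ = lam * K₁ * B₁) (hρ1 : ρ < 1)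
    (f : ℝ → ℝ → ℝ)
    (hfint : IntegrableOn (Function.uncurry f)
      (Set.Icc (0 : ℝ) 1 ×ˢ Set.Icc (0 : ℝ) 1))
    (heq : ∀ x ∈ Set.Icc (0 : ℝ) 1, ∀ y ∈ Set.Icc (0 : ℝ) 1,
      (ρ * π y + (1 - ρ)) * f x y
        = ρ * cint x y (fun u => (ρ * π u + (1 - ρ)) * (π y * f x u + π x * f y u))
          + lam * K₁ * π x *
            (α * cint x y (fun u => ρ * π u + (1 - ρ))
              + ρ * B₂ / (2 * B₁) * π y
              + B₁ * π y * (K₂ / K₁) * cint x y (fun u => ρ * π u + (1 - ρ)))) :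
    (∫ u in (0 : ℝ)..1, ∫ x in (0 : ℝ)..1, (ρ * π u + (1 - ρ)) * f x u)
      = lam * K₁ / (2 * (1 - ρ)) * (α + lam * K₁ * B₂ + B₁ * K₂ / K₁) :=
  integral_equation_gives_mean_queue_length_general π hπmeas hπnn hπbd hπint lam K₁ B₁ B₂ K₂ α ρ hB₁
    hρdef hρ1 f hfint heq
end

section
/- Let B be a nonnegative real random variable with finite mean E[B], and let φ_B(ω) = E[exp(−ω·B)] for ω ≥ 0 be its Laplace–Stieltjes transform. Let K be a random variable taking values in the positive integers with finite mean E[K], and let K̃(s) = E[s^K] for s ∈ [0,1] be its probability generating function. Let λ > 0 and set ρ = λ·E[K]·E[B], and assume ρ < 1. Define δ(ω) = λ·(1 − K̃(φ_B(ω))) for ω ≥ 0. Then 0 ≤ δ(ω) ≤ ρ·ω for all ω ≥ 0; consequently, the iterates δ⁽⁰⁾(ω) = ω and δ⁽ⁱ⁺¹⁾(ω) = δ(δ⁽ⁱ⁾(ω)) satisfy 0 ≤ δ⁽ⁱ⁾(ω) ≤ ρⁱ·ω for all i ≥ 0, and the series ∑_{i=0}^{∞} δ⁽ⁱ⁾(ω)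 converges with sum at most ω/(1−ρ). -/
set_option maxHeartbeats 800000


open MeasureTheory

lemma one_sub_pow_le_nat_mul (s : ℝ) (hs0 : 0 ≤ s) (hs1 : s ≤ 1) :
    ∀ k : ℕ, 1 - s ^ k ≤ (k : ℝ) * (1 - s) := by
  intro k
  induction k with
  | zero => simp
  | succ n ih =>
    have hpow : s ^ n ≤ 1 := pow_le_one₀ hs0 hs1
    have : s * (1 - s ^ n) ≤ 1 - s ^ n := by nlinarith
    push_cast
    calc 1 - s ^ (n + 1) = (1 - s) + s * (1 - s ^ n) := by ring
    _ ≤ (1 - s) + (n : ℝ) * (1 - s) := by nlinarith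
    _ = ((n : ℝ) + 1) * (1 - s) := by ring

/-- Convergence of the iterated functional `δ(ω) = λ(1 − K̃(φ_B(ω)))` appearing
in the globally gated cycle-time LST: `0 ≤ δ(ω) ≤ ρω` for `ω ≥ 0`, hence the
iterates satisfy `0 ≤ δ⁽ⁱ⁾(ω) ≤ ρⁱω` and `∑_i δ⁽ⁱ⁾(ω)` converges with sum at
most `ω/(1−ρ)`. -/
theorem delta_iterates_summable
    {Ω : Type*} [MeasurableSpace Ω] (μ : Measure Ω) [IsProbabilityMeasure μ]
    (B : Ω → ℝ) (hBmeas : Measurable B) (hBnn : ∀ ω, 0 ≤ B ω)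
    (hBint : Integrable B μ)
    (K : Ω → ℕ) (hKmeas : Measurable K) (hKpos : ∀ ω, 1 ≤ K ω)
    (hKint : Integrable (fun ω => (K ω : ℝ)) μ)
    (lam : ℝ) (hlam : 0 < lam)
    (ρ : ℝ) (hρdef : ρ = lam * (∫ ω, (K ω : ℝ) ∂μ) * (∫ ω, B ω ∂μ))
    (hρ1 : ρ < 1)
    (φB : ℝ → ℝ) (hφB : ∀ w : ℝ, φB w = ∫ ω, Real.exp (-w * B ω) ∂μ)
    (Kt : ℝ → ℝ) (hKt : ∀ s : ℝ, Kt s = ∫ ω, s ^ K ω ∂μ)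
    (δ : ℝ → ℝ) (hδ : ∀ w : ℝ, δ w = lam * (1 - Kt (φB w))) :
    (∀ w : ℝ, 0 ≤ w → 0 ≤ δ w ∧ δ w ≤ ρ * w) ∧
    (∀ i : ℕ, ∀ w : ℝ, 0 ≤ w → 0 ≤ δ^[i] w ∧ δ^[i] w ≤ ρ ^ i * w) ∧
    (∀ w : ℝ, 0 ≤ w →
      ∃ S : ℝ, HasSum (fun i => δ^[i] w) S ∧ S ≤ w / (1 - ρ)) := by
  have hEB : 0 ≤ ∫ ω, B ω ∂μ := integral_nonneg hBnn
  have hEK : 0 ≤ ∫ ω, (K ω : ℝ) ∂μ :=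
    integral_nonneg fun ω => by positivity
  have hρ0 : 0 ≤ ρ := by rw [hρdef]; positivity
  -- integrability of exp(-w B)
  have hexpint : ∀ w : ℝ, 0 ≤ w → Integrable (fun ω => Real.exp (-w * B ω)) μ := by
    intro w hw
    refine Integrable.mono' (integrable_const 1)
      ((hBmeas.const_mul (-w)).exp.aestronglyMeasurable) ?_
    · filter_upwards with ω
      rw [Real.norm_eq_abs, abs_of_pos (Real.exp_pos _)]
      exact Real.exp_le_one_iff.mpr (by nlinarith [hBnn ω])
  -- φB bounds
  have hφ0 : ∀ w : ℝ, 0 ≤ w → 0 ≤ φB w := by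
    intro w hw
    rw [hφB]
    exact integral_nonneg fun ω => (Real.exp_pos _).le
  have hφ1 : ∀ w : ℝ, 0 ≤ w → φB w ≤ 1 := by
    intro w hw
    rw [hφB]
    calc ∫ ω, Real.exp (-w * B ω) ∂μ ≤ ∫ _ω, (1 : ℝ) ∂μ := by
          refine integral_mono (hexpint w hw) (integrable_const 1) fun ω => ?_
          exact Real.exp_le_one_iff.mpr (by nlinarith [hBnn ω])
    _ = 1 := by simp
  have hφlin : ∀ w : ℝ, 0 ≤ w → 1 - φB w ≤ w * ∫ ω, B ω ∂μ := by
    intro w hw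
    rw [hφB]
    have h1 : ∫ ω, (1 - Real.exp (-w * B ω)) ∂μ ≤ ∫ ω, w * B ω ∂μ := by
      refine integral_mono ((integrable_const 1).sub (hexpint w hw))
        (hBint.const_mul w) fun ω => ?_
      have := Real.add_one_le_exp (-w * B ω)
      simp only; linarith
    rw [integral_sub (integrable_const 1) (hexpint w hw), integral_const,
      integral_const_mul] at h1
    simpa using h1
  -- Kt bounds
  have hpowint : ∀ s : ℝ, 0 ≤ s → s ≤ 1 → Integrable (fun ω => s ^ K ω) μ := by
    intro s hs0 hs1
    refine Integrable.mono' (integrable_const 1)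
      ((measurable_const.pow hKmeas).aestronglyMeasurable) ?_
    filter_upwards with ω
    rw [Real.norm_eq_abs, abs_of_nonneg (pow_nonneg hs0 _)]
    exact pow_le_one₀ hs0 hs1
  have hKtle1 : ∀ s : ℝ, 0 ≤ s → s ≤ 1 → Kt s ≤ 1 := by
    intro s hs0 hs1
    rw [hKt]
    calc ∫ ω, s ^ K ω ∂μ ≤ ∫ _ω, (1 : ℝ) ∂μ :=
          integral_mono (hpowint s hs0 hs1) (integrable_const 1)
            fun ω => pow_le_one₀ hs0 hs1
    _ = 1 := by simp
  have hKtlin : ∀ s : ℝ, 0 ≤ s → s ≤ 1 →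
      1 - Kt s ≤ (∫ ω, (K ω : ℝ) ∂μ) * (1 - s) := by
    intro s hs0 hs1
    rw [hKt]
    have h1 : ∫ ω, (1 - s ^ K ω) ∂μ ≤ ∫ ω, (K ω : ℝ) * (1 - s) ∂μ := by
      refine integral_mono ((integrable_const 1).sub (hpowint s hs0 hs1))
        (hKint.mul_const _) fun ω => one_sub_pow_le_nat_mul s hs0 hs1 (K ω)
    rw [integral_sub (integrable_const 1) (hpowint s hs0 hs1), integral_const,
      integral_mul_const] at h1
    simpa using h1
  -- main bound on δ
  have hmain : ∀ w : ℝ, 0 ≤ w → 0 ≤ δ w ∧ δ w ≤ ρ * w := by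
    intro w hw
    have h0 := hφ0 w hw
    have h1 := hφ1 w hw
    constructor
    · rw [hδ]
      have := hKtle1 (φB w) h0 h1
      nlinarith
    · rw [hδ, hρdef]
      have h2 := hKtlin (φB w) h0 h1
      have h3 := hφlin w hw
      have h4 : lam * (1 - Kt (φB w)) ≤ lam * ((∫ ω, (K ω : ℝ) ∂μ) * (1 - φB w)) :=
        mul_le_mul_of_nonneg_left h2 hlam.le
      have h5 : (lam * ∫ ω, (K ω : ℝ) ∂μ) * (1 - φB w)
          ≤ (lam * ∫ ω, (K ω : ℝ) ∂μ) * (w * ∫ ω, B ω ∂μ) :=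
        mul_le_mul_of_nonneg_left h3 (mul_nonneg hlam.le hEK)
      nlinarith
  refine ⟨hmain, ?_, ?_⟩
  · -- iterates
    have hiter : ∀ i : ℕ, ∀ w : ℝ, 0 ≤ w → 0 ≤ δ^[i] w ∧ δ^[i] w ≤ ρ ^ i * w := by
      intro i
      induction i with
      | zero => intro w hw; simp [hw]
      | succ n ih =>
        intro w hw
        obtain ⟨h0, h1⟩ := ih w hw
        obtain ⟨h2, h3⟩ := hmain (δ^[n] w) h0
        rw [Function.iterate_succ_apply']
        refine ⟨h2, ?_⟩
        calc δ (δ^[n] w) ≤ ρ * δ^[n] w := h3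
        _ ≤ ρ * (ρ ^ n * w) := by nlinarith
        _ = ρ ^ (n + 1) * w := by ring
    exact hiter
  · -- summability
    have hiter : ∀ i : ℕ, ∀ w : ℝ, 0 ≤ w → 0 ≤ δ^[i] w ∧ δ^[i] w ≤ ρ ^ i * w := by
      intro i
      induction i with
      | zero => intro w hw; simp [hw]
      | succ n ih =>
        intro w hw
        obtain ⟨h0, h1⟩ := ih w hw
        obtain ⟨h2, h3⟩ := hmain (δ^[n] w) h0
        rw [Function.iterate_succ_apply']
        refine ⟨h2, ?_⟩
        calc δ (δ^[n] w) ≤ ρ * δ^[n] w := h3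
        _ ≤ ρ * (ρ ^ n * w) := by nlinarith
        _ = ρ ^ (n + 1) * w := by ring
    intro w hw
    have hgeom : Summable (fun i : ℕ => ρ ^ i * w) :=
      (summable_geometric_of_lt_one hρ0 hρ1).mul_right w
    have hsum : Summable (fun i : ℕ => δ^[i] w) :=
      Summable.of_nonneg_of_le (fun i => (hiter i w hw).1)
        (fun i => (hiter i w hw).2) hgeom
    refine ⟨∑' i, δ^[i] w, hsum.hasSum, ?_⟩
    calc ∑' i, δ^[i] w ≤ ∑' i, ρ ^ i * w :=
          Summable.tsum_le_tsum (fun i => (hiter i w hw).2) hsum hgeom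
    _ = (1 - ρ)⁻¹ * w := by
          rw [tsum_mul_right, tsum_geometric_of_lt_one hρ0 hρ1]
    _ = w / (1 - ρ) := by ring
end
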